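/- Let h₅ be the 5-dimensional real Heisenberg Lie algebra with basis e₁,…,e₅ whose only nonzero brackets among basis elements are [e₁,e₂] = e₅ and [e₃,e₄] = e₅, and let g = h₅ ⊕ ℝ³ (direct sum with a 3-dimensional abelian Lie algebra). Then g admits no SKT structure: for every complex structure J on g and every J-compatible inner product on g, the Bismut torsion 3-form is not closed. -/

import Mathlib

/-- The Bismut torsion 3-form of a complex structure `J` and a `J`-compatible inner
product `B` on a Lie algebra: `c(X,Y,Z) = −⟨[JX,JY],Z⟩ − ⟨[JY,JZ],X⟩ − ⟨[JZ,JX],Y⟩`. -/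
def bismutC {g R : Type*} [LieRing g] [Ring R] (B : g → g → R) (J : g → g)
    (X Y Z : g) : R :=
  - B ⁅J X, J Y⁆ Z - B ⁅J Y, J Z⁆ X - B ⁅J Z, J X⁆ Y

/-- The Chevalley–Eilenberg differential of a 3-form `c` on a Lie algebra. -/
def dC {g R : Type*} [LieRing g] [Ring R] (c : g → g → g → R) (X Y Z W : g) : R :=
  - c ⁅X, Y⁆ Z W + c ⁅X, Z⁆ Y W - c ⁅X, W⁆ Y Z
    - c ⁅Y, Z⁆ X W + c ⁅Y, W⁆ X Z - c ⁅Z, W⁆ X Y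

/-!
The bracket of `h₅ ⊕ ℝ³` takes values in the line `ℝ e₅`, and `e₅` is central. Since `e₅` and
`J e₅` are linearly independent, the integrability condition splits along them and forces
`[JX, JY] = [X, Y]`. Hence `c(e₅, X, Y) = -⟨[X, Y], e₅⟩`, and
`dc(e₁, e₂, e₃, e₄) = -c(e₅, e₃, e₄) - c(e₅, e₁, e₂) = 2 ⟨e₅, e₅⟩ > 0`.
-/

theorem linearIndependent_pair_apply_of_apply_apply_eq_neg {K V : Type*} [Field K]
    [LinearOrder K] [IsStrictOrderedRing K] [AddCommGroup V] [Module K V] {J : V →ₗ[K] V}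
    (hJ : ∀ X, J (J X) = -X) {z : V} (hz : z ≠ 0) : LinearIndependent K ![z, J z] := by
  refine LinearIndependent.pair_iff.2 fun s t hst => ?_
  have hJst : s • J z - t • z = 0 := by
    simpa [hJ, sub_eq_add_neg] using congrArg J hst
  have hsq : (s ^ 2 + t ^ 2) • z = 0 := calc
    (s ^ 2 + t ^ 2) • z = s • (s • z + t • J z) - t • (s • J z - t • z) := by module
    _ = 0 := by rw [hst, hJst, smul_zero, smul_zero, sub_zero]
  have hsum : s ^ 2 + t ^ 2 = 0 := (smul_eq_zero.1 hsq).resolve_right hz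
  constructor <;> nlinarith [sq_nonneg s, sq_nonneg t]

theorem lie_apply_apply_of_lie_mem_span_singleton {K L : Type*} [Field K] [LinearOrder K]
    [IsStrictOrderedRing K] [LieRing L] [LieAlgebra K L] {J : L →ₗ[K] L}
    (hJ : ∀ X, J (J X) = -X)
    (hint : ∀ X Y : L, ⁅X, Y⁆ - ⁅J X, J Y⁆ + J ⁅J X, Y⁆ + J ⁅X, J Y⁆ = 0)
    {z : L} (hz : z ≠ 0) (hline : ∀ X Y : L, ⁅X, Y⁆ ∈ K ∙ z) (X Y : L) :
    ⁅J X, J Y⁆ = ⁅X, Y⁆ := by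
  obtain ⟨a, ha⟩ := Submodule.mem_span_singleton.1 (hline X Y)
  obtain ⟨b, hb⟩ := Submodule.mem_span_singleton.1 (hline (J X) (J Y))
  obtain ⟨c, hc⟩ := Submodule.mem_span_singleton.1 (hline (J X) Y)
  obtain ⟨d, hd⟩ := Submodule.mem_span_singleton.1 (hline X (J Y))
  have hsplit : (a - b) • z + (c + d) • J z = 0 := by
    rw [← hint X Y, ← ha, ← hb, ← hc, ← hd, map_smul, map_smul]
    module
  have hab := (LinearIndependent.pair_iff.1
    (linearIndependent_pair_apply_of_apply_apply_eq_neg hJ hz) _ _ hsplit).1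
  rw [← ha, ← hb, sub_eq_zero.1 hab]

section BismutTorsion

variable {R g : Type*} [CommRing R] [LieRing g] [LieAlgebra R g] (B : g →ₗ[R] g →ₗ[R] R)

theorem bismutC_zero_left (J : g →ₗ[R] g) (Y Z : g) :
    bismutC (fun a b => B a b) J 0 Y Z = 0 := by
  simp [bismutC]

theorem bismutC_of_forall_lie_eq_zero {J : g → g} (hJJ : ∀ X Y : g, ⁅J X, J Y⁆ = ⁅X, Y⁆)
    {z : g} (hz : ∀ X : g, ⁅z, X⁆ = 0) (Y Z : g) :
    bismutC (fun a b => B a b) J z Y Z = -B ⁅Y, Z⁆ z := by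
  have hzr : ⁅Z, z⁆ = 0 := by rw [← lie_skew, hz, neg_zero]
  simp [bismutC, hJJ, hz, hzr]

end BismutTorsion

theorem lie_mem_of_basis {R g ι : Type*} [CommRing R] [LieRing g] [LieAlgebra R g]
    (b : Module.Basis ι R g) {S : Submodule R g} (h : ∀ i j, ⁅b i, b j⁆ ∈ S) (X Y : g) :
    ⁅X, Y⁆ ∈ S := by
  have hzero : (LieAlgebra.ad R g : g →ₗ[R] Module.End R g).compr₂ S.mkQ = 0 :=
    b.ext fun i => b.ext fun j => (Submodule.Quotient.mk_eq_zero S).2 (h i j)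
  exact (Submodule.Quotient.mk_eq_zero S).1 (LinearMap.congr_fun₂ hzero X Y)

/-- the Lie algebra `h₅ ⊕ ℝ³` (basis `e₁,…,e₈`, i.e. `e 0, …, e 7` below,
with nonzero brackets `[e₁,e₂]=e₅` and `[e₃,e₄]=e₅`) admits no SKT structure: for every
complex structure `J` and every `J`-compatible inner product, the Bismut torsion 3-form
is not closed. -/
theorem h5_plus_R3_admits_no_SKT
    {g : Type*} [LieRing g] [LieAlgebra ℝ g]
    (e : Module.Basis (Fin 8) ℝ g)
    (h12 : ⁅e 0, e 1⁆ = e 4)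
    (h34 : ⁅e 2, e 3⁆ = e 4)
    (hzero : ∀ i j : Fin 8,
      ¬ ((i = 0 ∧ j = 1) ∨ (i = 1 ∧ j = 0) ∨ (i = 2 ∧ j = 3) ∨ (i = 3 ∧ j = 2)) →
      ⁅e i, e j⁆ = 0) :
    ∀ (J : g →ₗ[ℝ] g),
      (∀ X : g, J (J X) = -X) →
      (∀ X Y : g, ⁅X, Y⁆ - ⁅J X, J Y⁆ + J ⁅J X, Y⁆ + J ⁅X, J Y⁆ = 0) →
      ∀ (B : g →ₗ[ℝ] g →ₗ[ℝ] ℝ),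
        (∀ X Y : g, B X Y = B Y X) →
        (∀ X : g, X ≠ 0 → 0 < B X X) →
        (∀ X Y : g, B (J X) (J Y) = B X Y) →
        ∃ X Y Z W : g, dC (bismutC (fun a b => B a b) J) X Y Z W ≠ 0 := by
  intro J hJ hint B _ hpos _
  have hline : ∀ X Y : g, ⁅X, Y⁆ ∈ ℝ ∙ e 4 := lie_mem_of_basis e fun i j => by
    by_cases h0 : ⁅e i, e j⁆ = 0
    · exact h0 ▸ zero_mem _
    rcases not_not.1 (mt (hzero i j) h0) with ⟨rfl, rfl⟩ | ⟨rfl, rfl⟩ | ⟨rfl, rfl⟩ | ⟨rfl, rfl⟩ <;>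
      simp [← lie_skew (e 1), ← lie_skew (e 3), h12, h34, Submodule.mem_span_singleton_self]
  have hcentral : ∀ X : g, ⁅e 4, X⁆ = 0 := by
    have had : LieAlgebra.ad ℝ g (e 4) = 0 := e.ext fun j => hzero 4 j (by simp)
    exact fun X => by simpa using LinearMap.congr_fun had X
  have hJJ := lie_apply_apply_of_lie_mem_span_singleton hJ hint (e.ne_zero 4) hline
  refine ⟨e 0, e 1, e 2, e 3, ?_⟩
  rw [dC, h12, h34, hzero 0 2 (by decide), hzero 0 3 (by decide), hzero 1 2 (by decide),
    hzero 1 3 (by decide), bismutC_zero_left, bismutC_zero_left, bismutC_zero_left,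
    bismutC_zero_left, bismutC_of_forall_lie_eq_zero B hJJ hcentral,
    bismutC_of_forall_lie_eq_zero B hJJ hcentral, h12, h34]
  linarith [hpos (e 4) (e.ne_zero 4)]
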